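/- Let beta, nu : R -> R be bounded, Lipschitz continuous and even (beta(alpha) = beta(-alpha), nu(alpha) = nu(-alpha)), let N > 0, m0 > 0, and let (S, m, R) : [0,T] -> R^3 be a C^1 solution of the time-dependent SIR model dS/dt = -(S/N) beta(t) m, dm/dt = (S/N) beta(t) m - nu(t) m, dR/dt = nu(t) m with m(0) = m0, where beta(t) and nu(t) denote the values of beta and nu at the point t. Define I(t) = (m(t)/2)(delta_{-t} + delta_{t}). Then: (i) integral over R of beta(alpha) dI(t)(alpha) = beta(t) m(t) and integral over R of nu(alpha) dI(t)(alpha) = nu(t) m(t) for all t; (ii) the triple (S, I, R) is a solution of the coupled system dS/dt = -(S/N) integral of beta dI, dI/dt = V[I] + (S/N) beta I - nu I, dR/dt = integral of nu dI, with V the splitting PVF: for every f in C_c^infinity(R) and every t in (0,T), d/dt of the integral of f dI(t) = integral of grad f(x) . v dV[I(t)](x,v) + integral of f(x)((S(t)/N) beta(x) - nu(x)) dI(t)(x). -/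

import Mathlib

open MeasureTheory Set Metric Filter ENNReal RealInnerProductSpace

noncomputable section

/-- Euclidean space `ℝ^n`. -/
abbrev Euc (n : ℕ) := EuclideanSpace ℝ (Fin n)

/-- `τ` is a transference plan between `μ` and `ν`. -/
def IsPlan {X Y : Type*} [MeasurableSpace X] [MeasurableSpace Y]
    (τ : Measure (X × Y)) (μ : Measure X) (ν : Measure Y) : Prop :=
  τ.map Prod.fst = μ ∧ τ.map Prod.snd = ν

/-- Optimal transport cost with a general cost function. -/
def WassCost {X Y : Type*} [MeasurableSpace X] [MeasurableSpace Y]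
    (c : X → Y → ℝ≥0∞) (μ : Measure X) (ν : Measure Y) : ℝ≥0∞ :=
  sInf { r | ∃ τ : Measure (X × Y), IsPlan τ μ ν ∧ r = ∫⁻ p, c p.1 p.2 ∂τ }

/-- The Wasserstein distance `W(μ,ν)`. -/
def Wass {X : Type*} [MeasurableSpace X] [PseudoEMetricSpace X]
    (μ ν : Measure X) : ℝ≥0∞ :=
  WassCost (fun x y => edist x y) μ ν

/-- The generalized Wasserstein distance `W^g(μ,ν)`. -/
def GWass {X : Type*} [MeasurableSpace X] [PseudoEMetricSpace X]
    (μ ν : Measure X) : ℝ≥0∞ :=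
  sInf { r | ∃ μ' ν' : Measure X, μ' ≤ μ ∧ ν' ≤ ν ∧ μ' univ = ν' univ ∧
    r = (μ univ - μ' univ) + (ν univ - ν' univ) + Wass μ' ν' }

/-- `τ` is an optimal transference plan between `μ` and `ν`. -/
def IsOptPlan {X : Type*} [MeasurableSpace X] [PseudoEMetricSpace X]
    (τ : Measure (X × X)) (μ ν : Measure X) : Prop :=
  IsPlan τ μ ν ∧ ∫⁻ p, edist p.1 p.2 ∂τ = Wass μ ν

/-- `(μ',ν')` attains the infimum in the definition of `W^g(μ,ν)`. -/
def IsGWassMinimizer {X : Type*} [MeasurableSpace X] [PseudoEMetricSpace X]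
    (μ ν μ' ν' : Measure X) : Prop :=
  μ' ≤ μ ∧ ν' ≤ ν ∧ μ' univ = ν' univ ∧
  (μ univ - μ' univ) + (ν univ - ν' univ) + Wass μ' ν' = GWass μ ν

/-- The operator `𝒲^g` on measures on the tangent bundle `X × X`. -/
def WcalG {X : Type*} [MeasurableSpace X] [PseudoEMetricSpace X]
    (V₁ V₂ : Measure (X × X)) : ℝ≥0∞ :=
  sInf { r | ∃ (W₁ W₂ : Measure (X × X)) (T : Measure ((X × X) × (X × X))),
    W₁ ≤ V₁ ∧ W₂ ≤ V₂ ∧ IsPlan T W₁ W₂ ∧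
    IsGWassMinimizer (V₁.map Prod.fst) (V₂.map Prod.fst)
      (W₁.map Prod.fst) (W₂.map Prod.fst) ∧
    IsOptPlan (T.map (fun p => (p.1.1, p.2.1))) (W₁.map Prod.fst) (W₂.map Prod.fst) ∧
    r = ∫⁻ p, edist p.1.2 p.2.2 ∂T }

/-- `μ` is concentrated on the set `s` (i.e. `supp μ ⊆ s` for closed `s`). -/
def ConcOn {X : Type*} [MeasurableSpace X] (μ : Measure X) (s : Set X) : Prop :=
  μ sᶜ = 0

/-- `μ` belongs to `M(X)`: positive measure with finite mass and compact support. -/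
def MemM {X : Type*} [MeasurableSpace X] [NormedAddCommGroup X] (μ : Measure X) : Prop :=
  μ univ ≠ ∞ ∧ ∃ R : ℝ, ConcOn μ (closedBall 0 R)

/-- `V` is a probability vector field: `π₁ # V[μ] = μ`. -/
def IsPVF {X : Type*} [MeasurableSpace X] (V : Measure X → Measure (X × X)) : Prop :=
  ∀ μ : Measure X, (V μ).map Prod.fst = μ

/-- (H:bound): support sublinearity of the PVF `V` with constant `C`. -/
def HBound {X : Type*} [MeasurableSpace X] [NormedAddCommGroup X]
    (V : Measure X → Measure (X × X)) (C : ℝ) : Prop :=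
  0 < C ∧ ∀ (μ : Measure X) (R : ℝ), 0 ≤ R → ConcOn μ (closedBall 0 R) →
    ConcOn (V μ) {p : X × X | ‖p.2‖ ≤ C * (1 + R)}

/-- (OM:Lip-g): local Lipschitz continuity of the ODE vector field `g`. -/
def OMLipg (m n : ℕ) (g : Euc m → Measure (Euc n) → Euc m) : Prop :=
  ∀ R : ℝ, 0 < R → ∃ L : ℝ, 0 < L ∧
    ∀ (x y : Euc m) (μ ν : Measure (Euc n)), ‖x‖ ≤ R → ‖y‖ ≤ R →
      MemM μ → MemM ν → ConcOn μ (closedBall 0 R) → ConcOn ν (closedBall 0 R) →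
      ENNReal.ofReal ‖g x μ - g y ν‖ ≤
        ENNReal.ofReal L * (ENNReal.ofReal ‖x - y‖ + GWass μ ν)

/-- (OM:Lip-V): local Lipschitz continuity of the PVF `V` w.r.t. `𝒲^g` and `W^g`. -/
def OMLipV (n : ℕ) (V : Measure (Euc n) → Measure (Euc n × Euc n)) : Prop :=
  ∀ R : ℝ, 0 < R → ∃ K : ℝ, 0 < K ∧
    ∀ μ ν : Measure (Euc n), MemM μ → MemM ν →
      ConcOn μ (closedBall 0 R) → ConcOn ν (closedBall 0 R) →
      WcalG (V μ) (V ν) ≤ ENNReal.ofReal K * GWass μ ν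

/-- (OM:bound-s): uniform bound on support and mass of the source `s`. -/
def OMBoundS (m n : ℕ) (src : Measure (Euc n) → Euc m → Measure (Euc n)) : Prop :=
  ∃ Rbar : ℝ, 0 < Rbar ∧ ∀ (μ : Measure (Euc n)) (x : Euc m),
    ConcOn (src μ x) (closedBall 0 Rbar) ∧ (src μ x) univ ≤ ENNReal.ofReal Rbar

/-- (OM:Lip-s): Lipschitz continuity of the source `s`. -/
def OMLipS (m n : ℕ) (src : Measure (Euc n) → Euc m → Measure (Euc n)) : Prop :=
  ∃ M : ℝ, 0 < M ∧ ∀ (x y : Euc m) (μ ν : Measure (Euc n)), MemM μ → MemM ν →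
    GWass (src μ x) (src ν y) ≤
      ENNReal.ofReal M * (ENNReal.ofReal ‖x - y‖ + GWass μ ν)

/-- A solution of the coupled ODE-MDE system `ẋ = g(x,μ)`, `μ̇ = V[μ] + s[μ,x]`
on `[0,T]` with initial datum `(x₀,μ₀)` (weak formulation in integral form). -/
def IsSolODEMDE (m n : ℕ) (T : ℝ)
    (g : Euc m → Measure (Euc n) → Euc m)
    (V : Measure (Euc n) → Measure (Euc n × Euc n))
    (src : Measure (Euc n) → Euc m → Measure (Euc n))
    (x0 : Euc m) (μ0 : Measure (Euc n))
    (x : ℝ → Euc m) (μ : ℝ → Measure (Euc n)) : Prop :=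
  (∀ t ∈ Icc 0 T, x t = x0 + ∫ τ in (0:ℝ)..t, g (x τ) (μ τ)) ∧
  μ 0 = μ0 ∧
  (∃ C : ℝ≥0∞, C ≠ ∞ ∧ ∀ t ∈ Icc 0 T, μ t univ ≤ C) ∧
  (∀ f : Euc n → ℝ, ContDiff ℝ (⊤ : ℕ∞) f → HasCompactSupport f →
    ∀ t ∈ Icc 0 T,
      ∫ y, f y ∂(μ t) = (∫ y, f y ∂μ0) +
        ∫ s in (0:ℝ)..t,
          ((∫ p : Euc n × Euc n, ⟪gradient f p.1, p.2⟫ ∂(V (μ s))) +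
           (∫ y, f y ∂(src (μ s) (x s)))))

/-- A Lipschitz semigroup for the coupled ODE-MDE system, with components
`S¹ : [0,T] × ℝ^m × M(ℝ^n) → ℝ^m` and `S² : [0,T] × ℝ^m × M(ℝ^n) → M(ℝ^n)`. -/
def IsLipSemigroup (m n : ℕ) (T : ℝ)
    (g : Euc m → Measure (Euc n) → Euc m)
    (V : Measure (Euc n) → Measure (Euc n × Euc n))
    (src : Measure (Euc n) → Euc m → Measure (Euc n))
    (S1 : ℝ → Euc m → Measure (Euc n) → Euc m)
    (S2 : ℝ → Euc m → Measure (Euc n) → Measure (Euc n)) : Prop :=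
  (∀ (x : Euc m) (μ : Measure (Euc n)), MemM μ → S1 0 x μ = x ∧ S2 0 x μ = μ) ∧
  (∀ s t : ℝ, 0 ≤ s → 0 ≤ t → s + t ≤ T →
    ∀ (x : Euc m) (μ : Measure (Euc n)), MemM μ →
      S1 t (S1 s x μ) (S2 s x μ) = S1 (t + s) x μ ∧
      S2 t (S1 s x μ) (S2 s x μ) = S2 (t + s) x μ) ∧
  (∀ (x : Euc m) (μ : Measure (Euc n)), MemM μ →
    IsSolODEMDE m n T g V src x μ (fun t => S1 t x μ) (fun t => S2 t x μ)) ∧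
  (∀ R M : ℝ, 0 < R → 0 < M → ∃ C : ℝ, 0 < C ∧
    ∀ (x y : Euc m) (μ ν : Measure (Euc n)), MemM μ → MemM ν →
      ‖x‖ ≤ M → ‖y‖ ≤ M →
      ConcOn μ (closedBall 0 R) → ConcOn ν (closedBall 0 R) →
      μ univ + ν univ ≤ ENNReal.ofReal M →
      ∀ s ∈ Icc (0:ℝ) T, ∀ t ∈ Icc (0:ℝ) T,
        ‖S1 t x μ‖ ≤ C ∧
        ConcOn (S2 t x μ) (closedBall 0 (Real.exp (C * t) * (R + M + 1))) ∧
        ENNReal.ofReal ‖S1 t x μ - S1 t y ν‖ + GWass (S2 t x μ) (S2 t y ν) ≤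
          ENNReal.ofReal (Real.exp (C * t)) * (ENNReal.ofReal ‖x - y‖ + GWass μ ν) ∧
        ENNReal.ofReal ‖S1 t x μ - S1 s x μ‖ + GWass (S2 t x μ) (S2 s x μ) ≤
          ENNReal.ofReal (C * |t - s|))

/-! ### One-dimensional constructions -/

/-- The barycenter `B(μ) = sup {x : μ((-∞,x]) ≤ |μ|/2}` of `μ ∈ M(ℝ)`. -/
def bar (μ : Measure ℝ) : ℝ :=
  sSup {x : ℝ | μ (Iic x) ≤ μ univ / 2}

/-- The splitting PVF `V[μ] = μ ⊗ ν_x`: mass strictly left of the barycenter moves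
with velocity `-1`, mass strictly to the right with velocity `+1`, and the mass at
the barycenter is split according to the coefficients `η` and `|μ|/2 - μ((-∞,B))`. -/
def splitPVF (μ : Measure ℝ) : Measure (ℝ × ℝ) :=
  ((μ.restrict (Iio (bar μ))).map (fun x => (x, (-1 : ℝ)))) +
  ((μ.restrict (Ioi (bar μ))).map (fun x => (x, (1 : ℝ)))) +
  (μ (Iic (bar μ)) - μ univ / 2) • Measure.dirac (bar μ, (1 : ℝ)) +
  (μ univ / 2 - μ (Iio (bar μ))) • Measure.dirac (bar μ, (-1 : ℝ))

/-- Index set for the 1D spatial grid `ℤ/N² ∩ [-N,N]`. -/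
def XIdx1 (N : ℕ) : Type := {i : ℤ // |i| ≤ (N : ℤ) ^ 3}

/-- Index set for the 1D velocity grid `ℤ/N ∩ [-N,N]`. -/
def VIdx1 (N : ℕ) : Type := {j : ℤ // |j| ≤ (N : ℤ) ^ 2}

instance (N : ℕ) : Countable (XIdx1 N) := by unfold XIdx1; infer_instance
instance (N : ℕ) : Countable (VIdx1 N) := by unfold VIdx1; infer_instance

/-- The 1D spatial grid point `x_i = i/N²`. -/
def gridX1 (N : ℕ) (i : XIdx1 N) : ℝ := (i.1 : ℝ) / (N : ℝ) ^ 2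

/-- The 1D velocity grid point `v_j = j/N`. -/
def gridV1 (N : ℕ) (j : VIdx1 N) : ℝ := (j.1 : ℝ) / (N : ℝ)

/-- The 1D spatial discretization operator `𝒜^x_N`. -/
def AxN1 (N : ℕ) (μ : Measure ℝ) : Measure ℝ :=
  Measure.sum (fun i : XIdx1 N =>
    μ (Ico (gridX1 N i) (gridX1 N i + 1 / (N : ℝ) ^ 2)) • Measure.dirac (gridX1 N i))

/-- The 1D mass `m^v_{ij}(W) = W({(x_i, v) : v ∈ v_j + Q'})`. -/
def mv1 (N : ℕ) (W : Measure (ℝ × ℝ)) (i : XIdx1 N) (j : VIdx1 N) : ℝ≥0∞ :=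
  W {p | p.1 = gridX1 N i ∧ p.2 ∈ Ico (gridV1 N j) (gridV1 N j + 1 / (N : ℝ))}

/-- The 1D lattice approximate solution (LAS) for the MDE `μ̇ = V[μ]` at the
discrete times `ℓ Δ_N`. -/
def LAS1 (V : Measure ℝ → Measure (ℝ × ℝ)) (N : ℕ) (μ0 : Measure ℝ) :
    ℕ → Measure ℝ
  | 0 => AxN1 N μ0
  | l + 1 =>
    Measure.sum (fun ij : XIdx1 N × VIdx1 N =>
      mv1 N (V (LAS1 V N μ0 l)) ij.1 ij.2 •
        Measure.dirac (gridX1 N ij.1 + (1 / (N : ℝ)) * gridV1 N ij.2))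

/-- The 1D lattice approximate solution interpolated at time `t`. -/
def LAS1t (V : Measure ℝ → Measure (ℝ × ℝ)) (N : ℕ) (μ0 : Measure ℝ) (t : ℝ) :
    Measure ℝ :=
  let l : ℕ := ⌊t * (N : ℝ)⌋₊
  let τ : ℝ := t - (l : ℝ) / (N : ℝ)
  Measure.sum (fun ij : XIdx1 N × VIdx1 N =>
    mv1 N (V (LAS1 V N μ0 l)) ij.1 ij.2 •
      Measure.dirac (gridX1 N ij.1 + τ * gridV1 N ij.2))

lemma integrable_dirac_of_meas {φ : ℝ → ℝ} (hφ : Measurable φ) (a : ℝ) :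
    Integrable φ (Measure.dirac a) := by
  refine ⟨hφ.aestronglyMeasurable, ?_⟩
  rw [HasFiniteIntegral, lintegral_dirac]
  exact ENNReal.coe_lt_top

lemma integral_smul_dirac_add {φ : ℝ → ℝ} (hφ : Measurable φ) (c a b : ℝ) (hc : 0 ≤ c) :
    ∫ y, φ y ∂(ENNReal.ofReal c • (Measure.dirac a + Measure.dirac b)) = c * (φ a + φ b) := by
  rw [integral_smul_measure, integral_add_measure (integrable_dirac_of_meas hφ a)
    (integrable_dirac_of_meas hφ b), integral_dirac, integral_dirac,
    ENNReal.toReal_ofReal hc, smul_eq_mul]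

lemma integral_two_smul_dirac {φ : ℝ × ℝ → ℝ} (hφ : Measurable φ) (c : ℝ)
    (hc : 0 ≤ c) (p q : ℝ × ℝ) :
    ∫ y, φ y ∂(ENNReal.ofReal c • Measure.dirac p + ENNReal.ofReal c • Measure.dirac q)
      = c * (φ p + φ q) := by
  have hip : Integrable φ (Measure.dirac p) :=
    ⟨hφ.aestronglyMeasurable, by rw [HasFiniteIntegral, lintegral_dirac]; exact ENNReal.coe_lt_top⟩
  have hiq : Integrable φ (Measure.dirac q) :=
    ⟨hφ.aestronglyMeasurable, by rw [HasFiniteIntegral, lintegral_dirac]; exact ENNReal.coe_lt_top⟩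
  rw [integral_add_measure (hip.smul_measure (by simp)) (hiq.smul_measure (by simp)),
    integral_smul_measure, integral_smul_measure, integral_dirac, integral_dirac,
    ENNReal.toReal_ofReal hc, smul_eq_mul, smul_eq_mul]
  ring

lemma pos_of_linear_ode (T : ℝ) (hT : 0 < T) (a m : ℝ → ℝ)
    (ha : ContinuousOn a (Icc 0 T))
    (hm : ∀ t ∈ Icc (0:ℝ) T, HasDerivAt m (a t * m t) t) (h0 : 0 < m 0) :
    ∀ t ∈ Icc (0:ℝ) T, 0 < m t := by
  set atil : ℝ → ℝ := fun t => a (projIcc 0 T hT.le t) with hatil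
  have hcont : Continuous atil :=
    ha.comp_continuous (continuous_subtype_val.comp continuous_projIcc)
      (fun x => (projIcc 0 T hT.le x).2)
  set A : ℝ → ℝ := fun t => ∫ s in (0:ℝ)..t, atil s with hA
  have hAderiv : ∀ t : ℝ, HasDerivAt A (atil t) t := fun t =>
    (hcont.integral_hasStrictDerivAt 0 t).hasDerivAt
  set h : ℝ → ℝ := fun t => m t * Real.exp (-A t) with hh
  have hhd : ∀ t ∈ Icc (0:ℝ) T, HasDerivAt h 0 t := by
    intro t ht
    have h1 : HasDerivAt (fun s => Real.exp (-A s)) (Real.exp (-A t) * (-atil t)) t := by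
      exact (Real.hasDerivAt_exp (-A t)).comp t ((hAderiv t).neg)
    have h2 : HasDerivAt (fun s => m s * Real.exp (-A s)) _ t := (hm t ht).mul h1
    have : atil t = a t := by
      simp only [hatil, projIcc_of_mem hT.le ht]
    rw [this] at h2
    convert h2 using 1
    ring
  have hconst : ∀ t ∈ Icc (0:ℝ) T, h t = h 0 := by
    intro t ht
    refine constant_of_has_deriv_right_zero (f := h) (a := 0) (b := T) ?_ ?_ t ht
    · exact fun s hs => ((hhd s hs).continuousAt).continuousWithinAt
    · exact fun s hs => ((hhd s (Ico_subset_Icc_self hs)).hasDerivWithinAt)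
  intro t ht
  have h1 : m t * Real.exp (-A t) = m 0 * Real.exp (-A 0) := hconst t ht
  have h2 : 0 < m t * Real.exp (-A t) := by
    rw [h1]; positivity
  nlinarith [Real.exp_pos (-A t)]

lemma bar_eq (c : ℝ≥0∞) (hc0 : c ≠ 0) (hctop : c ≠ ∞) (t : ℝ) (ht : 0 < t) :
    bar (c • (Measure.dirac (-t) + Measure.dirac t)) = t := by
  have hset : {x : ℝ | (c • (Measure.dirac (-t) + Measure.dirac t)) (Iic x)
      ≤ (c • (Measure.dirac (-t) + Measure.dirac t)) univ / 2} = Iio t := by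
    ext x
    simp only [Measure.smul_apply, Measure.add_apply, Measure.dirac_apply, smul_eq_mul,
      mem_setOf_eq, mem_Iio]
    have huniv : (Iic x).indicator (1 : ℝ → ℝ≥0∞) (-t) + (Iic x).indicator 1 t ≤ 2 →
        True := fun _ => trivial
    simp only [indicator_univ, Pi.one_apply]
    have h2 : c * (1 + 1) / 2 = c := by
      rw [one_add_one_eq_two, mul_div_assoc, ENNReal.div_self two_ne_zero ofNat_ne_top,
        mul_one]
    rw [h2]
    constructor
    · intro h
      by_contra hx
      push_neg at hx
      have h1 : (Iic x).indicator (1 : ℝ → ℝ≥0∞) (-t) = 1 :=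
        indicator_of_mem (by simp; linarith) 1
      have h2' : (Iic x).indicator (1 : ℝ → ℝ≥0∞) t = 1 :=
        indicator_of_mem (by simpa using hx) 1
      rw [h1, h2', one_add_one_eq_two, mul_two] at h
      exact absurd h (not_le.2 (ENNReal.lt_add_right hctop hc0))
    · intro hx
      have h2' : (Iic x).indicator (1 : ℝ → ℝ≥0∞) t = 0 :=
        indicator_of_notMem (by simp; linarith) 1
      rw [h2', add_zero]
      calc c * (Iic x).indicator (1 : ℝ → ℝ≥0∞) (-t) ≤ c * 1 := by
            gcongr
            by_cases h : (-t) ∈ Iic x <;> simp [h]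
        _ = c := mul_one c
  rw [bar, hset, csSup_Iio]

lemma splitPVF_eq (c : ℝ≥0∞) (hc0 : c ≠ 0) (hctop : c ≠ ∞) (t : ℝ) (ht : 0 < t) :
    splitPVF (c • (Measure.dirac (-t) + Measure.dirac t))
      = c • Measure.dirac ((-t, -1) : ℝ × ℝ) + c • Measure.dirac ((t, 1) : ℝ × ℝ) := by
  classical
  have hbar := bar_eq c hc0 hctop t ht
  have hnt : (-t) < t := by linarith
  rw [splitPVF, hbar]
  have hres1 : (c • (Measure.dirac (-t) + Measure.dirac t)).restrict (Iio t)
      = c • Measure.dirac (-t) := by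
    rw [Measure.restrict_smul, Measure.restrict_add, restrict_dirac,
      restrict_dirac, if_pos (by simpa using hnt), if_neg (by simp), add_zero]
  have hres2 : (c • (Measure.dirac (-t) + Measure.dirac t)).restrict (Ioi t) = 0 := by
    rw [Measure.restrict_smul, Measure.restrict_add, restrict_dirac,
      restrict_dirac, if_neg (by simp; linarith), if_neg (by simp), add_zero, smul_zero]
  have hIic : (c • (Measure.dirac (-t) + Measure.dirac t)) (Iic t) = c + c := by
    simp only [Measure.smul_apply, Measure.add_apply, Measure.dirac_apply, smul_eq_mul]
    rw [indicator_of_mem (by simp; linarith) 1, indicator_of_mem (by simp) 1]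
    simp [mul_add]
  have hIio : (c • (Measure.dirac (-t) + Measure.dirac t)) (Iio t) = c := by
    simp only [Measure.smul_apply, Measure.add_apply, Measure.dirac_apply, smul_eq_mul]
    rw [indicator_of_mem (by simpa using hnt) 1, indicator_of_notMem (by simp) 1]
    simp
  have huniv2 : (c • (Measure.dirac (-t) + Measure.dirac t)) univ / 2 = c := by
    simp only [Measure.smul_apply, Measure.add_apply, Measure.dirac_apply, smul_eq_mul]
    simp only [indicator_univ, Pi.one_apply]
    rw [one_add_one_eq_two, mul_div_assoc, ENNReal.div_self two_ne_zero ofNat_ne_top,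
      mul_one]
  have hmap1 : (c • Measure.dirac (-t)).map (fun x => (x, (-1:ℝ)))
      = c • Measure.dirac ((-t, -1) : ℝ × ℝ) := by
    rw [Measure.map_smul, Measure.map_dirac' (by fun_prop)]
  rw [hres1, hres2, hmap1, hIic, hIio, huniv2, ENNReal.add_sub_cancel_right hctop, tsub_self,
    Measure.map_zero, zero_smul]
  simp

/-- **Example (the SIR model with mutations and the splitting PVF includes the
time-dependent SIR model as a special case): if `(S, m, R)` solves the
time-dependent SIR model and `β`, `ν` are even, then
`I(t) = (m(t)/2)(δ_{-t} + δ_t)` solves the coupled ODE-MDE system.** -/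
theorem SIR_time_dependent_special_case (T Npop : ℝ) (hT : 0 < T) (hNpop : 0 < Npop)
    (β ν : ℝ → ℝ)
    (hβLip : ∃ Lβ : ℝ, ∀ x y : ℝ, |β x - β y| ≤ Lβ * |x - y|)
    (hβbdd : ∃ Mβ : ℝ, ∀ x : ℝ, |β x| ≤ Mβ)
    (hνLip : ∃ Lν : ℝ, ∀ x y : ℝ, |ν x - ν y| ≤ Lν * |x - y|)
    (hνbdd : ∃ Mν : ℝ, ∀ x : ℝ, |ν x| ≤ Mν)
    (hβeven : ∀ α : ℝ, β α = β (-α)) (hνeven : ∀ α : ℝ, ν α = ν (-α))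
    (m0 : ℝ) (hm0 : 0 < m0)
    (S m R : ℝ → ℝ) (hm0eq : m 0 = m0)
    -- `(S, m, R)` is a `C¹` solution of the time-dependent SIR model:
    (hS : ∀ t ∈ Icc (0:ℝ) T, HasDerivAt S (-(S t / Npop) * β t * m t) t)
    (hm : ∀ t ∈ Icc (0:ℝ) T, HasDerivAt m ((S t / Npop) * β t * m t - ν t * m t) t)
    (hR : ∀ t ∈ Icc (0:ℝ) T, HasDerivAt R (ν t * m t) t) :
    -- the infected measure `I(t) = (m(t)/2)(δ_{-t} + δ_t)`:
    let I : ℝ → Measure ℝ := fun t =>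
      ENNReal.ofReal (m t / 2) • (Measure.dirac (-t) + Measure.dirac t)
    -- (i) integrating the even rates against `I(t)` gives the time-dependent rates:
    (∀ t ∈ Icc (0:ℝ) T,
      (∫ α, β α ∂(I t)) = β t * m t ∧ (∫ α, ν α ∂(I t)) = ν t * m t) ∧
    -- (ii) `(S, I, R)` solves the coupled ODE-MDE system with the splitting PVF:
    (∀ t ∈ Icc (0:ℝ) T,
      HasDerivAt S (-(S t / Npop) * ∫ α, β α ∂(I t)) t ∧
      HasDerivAt R (∫ α, ν α ∂(I t)) t) ∧
    (∀ f : ℝ → ℝ, ContDiff ℝ (⊤ : ℕ∞) f → HasCompactSupport f →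
      ∀ t ∈ Ioo (0:ℝ) T,
        HasDerivAt (fun s : ℝ => ∫ y, f y ∂(I s))
          ((∫ p : ℝ × ℝ, deriv f p.1 * p.2 ∂(splitPVF (I t))) +
           ∫ y, f y * ((S t / Npop) * β y - ν y) ∂(I t)) t) := by
  intro I
  -- continuity of β and ν
  have hβc : Continuous β := by
    obtain ⟨Lβ, hL⟩ := hβLip
    refine (LipschitzWith.of_dist_le_mul (K := Real.toNNReal Lβ) ?_).continuous
    intro x y
    rw [Real.coe_toNNReal', Real.dist_eq, Real.dist_eq]
    rcases eq_or_ne x y with rfl | hxy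
    · simp
    · calc |β x - β y| ≤ Lβ * |x - y| := hL x y
        _ ≤ max Lβ 0 * |x - y| :=
            mul_le_mul_of_nonneg_right (le_max_left _ _) (abs_nonneg _)
  have hνc : Continuous ν := by
    obtain ⟨Lν, hL⟩ := hνLip
    refine (LipschitzWith.of_dist_le_mul (K := Real.toNNReal Lν) ?_).continuous
    intro x y
    rw [Real.coe_toNNReal', Real.dist_eq, Real.dist_eq]
    rcases eq_or_ne x y with rfl | hxy
    · simp
    · calc |ν x - ν y| ≤ Lν * |x - y| := hL x y
        _ ≤ max Lν 0 * |x - y| :=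
            mul_le_mul_of_nonneg_right (le_max_left _ _) (abs_nonneg _)
  -- positivity of m on [0,T]
  have hmpos : ∀ t ∈ Icc (0:ℝ) T, 0 < m t := by
    refine pos_of_linear_ode T hT (fun t => S t / Npop * β t - ν t) m ?_ ?_ (hm0eq ▸ hm0)
    · apply ContinuousOn.sub
      · exact (ContinuousOn.div_const (fun t ht => ((hS t ht).continuousAt.continuousWithinAt))
          Npop).mul hβc.continuousOn
      · exact hνc.continuousOn
    · intro t ht
      have := hm t ht
      convert this using 1
      ring
  have hI : ∀ s : ℝ, I s = ENNReal.ofReal (m s / 2) • (Measure.dirac (-s) + Measure.dirac s) :=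
    fun _ => rfl
  -- generic integral computation
  have hint : ∀ (φ : ℝ → ℝ), Measurable φ → ∀ t ∈ Icc (0:ℝ) T,
      (∫ y, φ y ∂(I t)) = m t / 2 * (φ (-t) + φ t) := by
    intro φ hφ t ht
    rw [hI]
    exact integral_smul_dirac_add hφ _ _ _ (by linarith [hmpos t ht])
  have hβint : ∀ t ∈ Icc (0:ℝ) T, (∫ α, β α ∂(I t)) = β t * m t := by
    intro t ht
    rw [hint β hβc.measurable t ht, ← hβeven t]
    ring
  have hνint : ∀ t ∈ Icc (0:ℝ) T, (∫ α, ν α ∂(I t)) = ν t * m t := by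
    intro t ht
    rw [hint ν hνc.measurable t ht, ← hνeven t]
    ring
  refine ⟨fun t ht => ⟨hβint t ht, hνint t ht⟩, ?_, ?_⟩
  · intro t ht
    constructor
    · rw [hβint t ht]
      have := hS t ht
      convert this using 1
      ring
    · rw [hνint t ht]
      exact hR t ht
  · intro f hf hfc t ht
    have htI : t ∈ Icc (0:ℝ) T := Ioo_subset_Icc_self ht
    have hmt : 0 < m t := hmpos t htI
    have hfC : Continuous f := hf.continuous
    have hfd : Continuous (deriv f) := (hf.continuous_deriv (by simp))
    -- the function equals g near t
    have hEq : (fun s : ℝ => ∫ y, f y ∂(I s)) =ᶠ[nhds t]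
        (fun s : ℝ => m s / 2 * (f (-s) + f s)) := by
      filter_upwards [Ioo_mem_nhds ht.1 ht.2] with s hs
      exact hint f hfC.measurable s (Ioo_subset_Icc_self hs)
    -- derivative of g
    have hf1 : HasDerivAt (fun s : ℝ => f (-s)) (-(deriv f (-t))) t := by
      have : HasDerivAt (fun s : ℝ => f (-s)) (deriv f (-t) * -1) t := ((hf.differentiable (by simp) (-t)).hasDerivAt).comp t (hasDerivAt_neg t)
      simpa using this
    have hf2 : HasDerivAt f (deriv f t) t := (hf.differentiable (by simp) t).hasDerivAt
    have hg : HasDerivAt (fun s : ℝ => m s / 2 * (f (-s) + f s))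
        (((S t / Npop) * β t * m t - ν t * m t) / 2 * (f (-t) + f t)
          + m t / 2 * (-(deriv f (-t)) + deriv f t)) t :=
      ((hm t htI).div_const 2).mul (hf1.add hf2)
    -- compute the splitPVF integral
    have hc0 : ENNReal.ofReal (m t / 2) ≠ 0 := by
      simp only [ne_eq, ENNReal.ofReal_eq_zero, not_le]
      linarith
    have hsplit : splitPVF (I t)
        = ENNReal.ofReal (m t / 2) • Measure.dirac ((-t, -1) : ℝ × ℝ)
          + ENNReal.ofReal (m t / 2) • Measure.dirac ((t, 1) : ℝ × ℝ) := by
      rw [hI]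
      exact splitPVF_eq _ hc0 ENNReal.ofReal_ne_top t ht.1
    have hsint : (∫ p : ℝ × ℝ, deriv f p.1 * p.2 ∂(splitPVF (I t)))
        = m t / 2 * (deriv f (-t) * (-1) + deriv f t * 1) := by
      rw [hsplit]
      exact integral_two_smul_dirac (by fun_prop) _ (by linarith) _ _
    have hsrc : (∫ y, f y * ((S t / Npop) * β y - ν y) ∂(I t))
        = m t / 2 * (f (-t) * ((S t / Npop) * β (-t) - ν (-t))
            + f t * ((S t / Npop) * β t - ν t)) :=
      hint _ (by fun_prop) t htI
    rw [hsint, hsrc, ← hβeven t, ← hνeven t]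
    refine HasDerivAt.congr_of_eventuallyEq ?_ hEq
    refine hg.congr_deriv ?_
    ring
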